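/- arXiv:2505.02132 — 2 statements merged into one kernel-verified Lean document; each statement's English description precedes it below -/
import Mathlib

section
/- For every grid function ω in V⁰ one has (√3/3)·‖ω‖ ≤ ‖𝒜ω‖ ≤ ‖ω‖. -/
open Finset

noncomputable section

/-- spatial mesh size `h = 1/(2J)` -/
def msh (J : ℕ) : ℝ := 1 / (2 * (J : ℝ))

/-- discrete inner product `⟨Q, W⟩ = h ∑_{j=1}^{2J-1} Q_j W_j` -/
def gridIP (J : ℕ) (Q W : ℕ → ℝ) : ℝ :=
  msh J * ∑ j ∈ Finset.Icc 1 (2 * J - 1), Q j * W j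

/-- discrete `L²` norm -/
def gridNorm (J : ℕ) (Q : ℕ → ℝ) : ℝ :=
  Real.sqrt (gridIP J Q Q)

/-- the norm `‖Q‖_A = √(2h ∑_{j=1}^{J} Q_{2j-1}²)` -/
def gridNormA (J : ℕ) (Q : ℕ → ℝ) : ℝ :=
  Real.sqrt (2 * msh J * ∑ j ∈ Finset.Icc 1 J, Q (2 * j - 1) ^ 2)

/-- the norm `‖Q‖_B = √((2/3)‖Q‖² + (1/3)‖Q‖_A²)` -/
def gridNormB (J : ℕ) (Q : ℕ → ℝ) : ℝ :=
  Real.sqrt ((2 / 3) * gridNorm J Q ^ 2 + (1 / 3) * gridNormA J Q ^ 2)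

/-- compact operator `𝒜ω_j = (ω_{j+1} + 10 ω_j + ω_{j-1})/12` (interior formula) -/
def cA (ω : ℕ → ℝ) (j : ℕ) : ℝ := (ω (j + 1) + 10 * ω j + ω (j - 1)) / 12

/-- second difference `δ_xδ_x̄ ω_j = (ω_{j+1} - 2ω_j + ω_{j-1})/h²` -/
def dxx (J : ℕ) (ω : ℕ → ℝ) (j : ℕ) : ℝ :=
  (ω (j + 1) - 2 * ω j + ω (j - 1)) / msh J ^ 2

/-- forward difference `δ_x ω_j = (ω_{j+1} - ω_j)/h` -/
def dxf (J : ℕ) (ω : ℕ → ℝ) (j : ℕ) : ℝ := (ω (j + 1) - ω j) / msh J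

/-!
Write `𝒜 = (S₊ + 10 + S₋) / 12` with the shifts `(S₊ω)_j = ω_{j+1}`, `(S₋ω)_j = ω_{j-1}`.
Since `ω_0 = ω_{2J} = 0`, shifting a grid function only loses boundary terms, so
`‖S₊ω‖² + ‖S₋ω‖² ≤ 2‖ω‖²`. The weights `1, 10, 1` sum to `12`, so convexity of `x ↦ x²` gives
`‖𝒜ω‖² ≤ (10‖ω‖² + ‖S₊ω‖² + ‖S₋ω‖²) / 12 ≤ ‖ω‖²`. Bounding `2 ω_j ω_{j±1} ≥ -ω_j² - ω_{j±1}²`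
in the same way gives `⟨ω, 𝒜ω⟩ ≥ (2/3)‖ω‖²`, and Cauchy–Schwarz turns this into
`‖𝒜ω‖ ≥ (2/3)‖ω‖ ≥ (√3/3)‖ω‖`.
-/

lemma sum_Icc_comp_succ_add (f : ℕ → ℝ) (n : ℕ) :
    ∑ j ∈ Icc 1 n, f (j + 1) + f 1 = ∑ j ∈ Icc 1 n, f j + f (n + 1) := by
  induction n with
  | zero => simp
  | succ n ih => rw [sum_Icc_succ_top (by omega), sum_Icc_succ_top (by omega)]; linarith

lemma sum_Icc_comp_pred_add (f : ℕ → ℝ) (n : ℕ) :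
    ∑ j ∈ Icc 1 n, f (j - 1) + f n = ∑ j ∈ Icc 1 n, f j + f 0 := by
  induction n with
  | zero => simp
  | succ n ih =>
    rw [sum_Icc_succ_top (by omega), sum_Icc_succ_top (by omega), Nat.add_sub_cancel]
    linarith

lemma cA_sq_le (ω : ℕ → ℝ) (j : ℕ) :
    cA ω j ^ 2 ≤ (10 * ω j ^ 2 + (ω (j + 1) ^ 2 + ω (j - 1) ^ 2)) / 12 := by
  unfold cA
  nlinarith [sq_nonneg (ω (j + 1) - ω j), sq_nonneg (ω j - ω (j - 1)),
    sq_nonneg (ω (j + 1) - ω (j - 1))]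

lemma mul_cA_ge (ω : ℕ → ℝ) (j : ℕ) :
    (9 * ω j ^ 2 - (ω (j + 1) ^ 2 + ω (j - 1) ^ 2) / 2) / 12 ≤ ω j * cA ω j := by
  unfold cA
  nlinarith [sq_nonneg (ω j + ω (j + 1)), sq_nonneg (ω j + ω (j - 1))]

section ZeroBoundary

variable {ω : ℕ → ℝ} {n : ℕ}

lemma sum_sq_succ_le (hn : ω (n + 1) = 0) :
    ∑ j ∈ Icc 1 n, ω (j + 1) ^ 2 ≤ ∑ j ∈ Icc 1 n, ω j ^ 2 := by
  have := sum_Icc_comp_succ_add (ω · ^ 2) n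
  simp only [hn] at this
  nlinarith [sq_nonneg (ω 1)]

lemma sum_sq_pred_le (h0 : ω 0 = 0) :
    ∑ j ∈ Icc 1 n, ω (j - 1) ^ 2 ≤ ∑ j ∈ Icc 1 n, ω j ^ 2 := by
  have := sum_Icc_comp_pred_add (ω · ^ 2) n
  simp only [h0] at this
  nlinarith [sq_nonneg (ω n)]

lemma sum_neighbour_sq_le (h0 : ω 0 = 0) (hn : ω (n + 1) = 0) :
    ∑ j ∈ Icc 1 n, (ω (j + 1) ^ 2 + ω (j - 1) ^ 2) ≤ 2 * ∑ j ∈ Icc 1 n, ω j ^ 2 := by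
  rw [sum_add_distrib]
  linarith [sum_sq_succ_le hn, sum_sq_pred_le (n := n) h0]

lemma sum_cA_sq_le (h0 : ω 0 = 0) (hn : ω (n + 1) = 0) :
    ∑ j ∈ Icc 1 n, cA ω j ^ 2 ≤ ∑ j ∈ Icc 1 n, ω j ^ 2 := by
  calc ∑ j ∈ Icc 1 n, cA ω j ^ 2
      ≤ ∑ j ∈ Icc 1 n, (10 * ω j ^ 2 + (ω (j + 1) ^ 2 + ω (j - 1) ^ 2)) / 12 :=
        sum_le_sum fun j _ ↦ cA_sq_le ω j
    _ = (10 * ∑ j ∈ Icc 1 n, ω j ^ 2 +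
          ∑ j ∈ Icc 1 n, (ω (j + 1) ^ 2 + ω (j - 1) ^ 2)) / 12 := by
        rw [← sum_div, sum_add_distrib, mul_sum]
    _ ≤ ∑ j ∈ Icc 1 n, ω j ^ 2 := by linarith [sum_neighbour_sq_le h0 hn]

lemma sum_sq_le_sum_mul_cA (h0 : ω 0 = 0) (hn : ω (n + 1) = 0) :
    2 / 3 * ∑ j ∈ Icc 1 n, ω j ^ 2 ≤ ∑ j ∈ Icc 1 n, ω j * cA ω j := by
  calc 2 / 3 * ∑ j ∈ Icc 1 n, ω j ^ 2
      ≤ (9 * ∑ j ∈ Icc 1 n, ω j ^ 2 -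
          (∑ j ∈ Icc 1 n, (ω (j + 1) ^ 2 + ω (j - 1) ^ 2)) / 2) / 12 := by
        linarith [sum_neighbour_sq_le h0 hn]
    _ = ∑ j ∈ Icc 1 n, (9 * ω j ^ 2 - (ω (j + 1) ^ 2 + ω (j - 1) ^ 2) / 2) / 12 := by
        rw [← sum_div, sum_sub_distrib, mul_sum, sum_div]
    _ ≤ ∑ j ∈ Icc 1 n, ω j * cA ω j := sum_le_sum fun j _ ↦ mul_cA_ge ω j

lemma sq_mul_sum_sq_le_sum_cA_sq (h0 : ω 0 = 0) (hn : ω (n + 1) = 0) :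
    (2 / 3) ^ 2 * ∑ j ∈ Icc 1 n, ω j ^ 2 ≤ ∑ j ∈ Icc 1 n, cA ω j ^ 2 := by
  set T := ∑ j ∈ Icc 1 n, ω j ^ 2
  set S := ∑ j ∈ Icc 1 n, cA ω j ^ 2
  have hT : 0 ≤ T := sum_nonneg fun j _ ↦ sq_nonneg _
  have hS : 0 ≤ S := sum_nonneg fun j _ ↦ sq_nonneg _
  have hCS : (2 / 3 * T) ^ 2 ≤ T * S :=
    (pow_le_pow_left₀ (by positivity) (sum_sq_le_sum_mul_cA h0 hn) 2).trans
      (sum_mul_sq_le_sq_mul_sq (Icc 1 n) ω (cA ω))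
  rcases hT.eq_or_lt with hT0 | hTpos
  · rw [← hT0]
    linarith
  · nlinarith

end ZeroBoundary

lemma msh_nonneg (J : ℕ) : 0 ≤ msh J := by
  unfold msh
  positivity

lemma gridIP_self_nonneg (J : ℕ) (Q : ℕ → ℝ) : 0 ≤ gridIP J Q Q :=
  mul_nonneg (msh_nonneg J) (sum_nonneg fun _ _ ↦ mul_self_nonneg _)

lemma mul_gridNorm_le_of_sum_sq_le {J : ℕ} {P Q : ℕ → ℝ} {c : ℝ} (hc : 0 ≤ c)
    (h : c ^ 2 * ∑ j ∈ Icc 1 (2 * J - 1), P j ^ 2 ≤ ∑ j ∈ Icc 1 (2 * J - 1), Q j ^ 2) :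
    c * gridNorm J P ≤ gridNorm J Q := by
  unfold gridNorm
  rw [Real.le_sqrt (by positivity) (gridIP_self_nonneg J Q), mul_pow,
    Real.sq_sqrt (gridIP_self_nonneg J P)]
  simp only [gridIP, ← sq]
  rw [mul_left_comm]
  exact mul_le_mul_of_nonneg_left h (msh_nonneg J)

/-- For every `ω ∈ V⁰`, `(√3/3)‖ω‖ ≤ ‖𝒜ω‖ ≤ ‖ω‖`. -/
theorem stmt_1 (J : ℕ) (hJ : 0 < J) (ω : ℕ → ℝ)
    (hω0 : ω 0 = 0) (hωJ : ω (2 * J) = 0) :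
    Real.sqrt 3 / 3 * gridNorm J ω ≤ gridNorm J (cA ω) ∧
      gridNorm J (cA ω) ≤ gridNorm J ω := by
  have hn : ω (2 * J - 1 + 1) = 0 := by rwa [Nat.sub_add_cancel (by omega)]
  have hsqrt3 : Real.sqrt 3 ≤ 2 := Real.sqrt_le_iff.mpr ⟨by norm_num, by norm_num⟩
  constructor
  · calc Real.sqrt 3 / 3 * gridNorm J ω
        ≤ 2 / 3 * gridNorm J ω := by gcongr; exact Real.sqrt_nonneg _
      _ ≤ gridNorm J (cA ω) :=
        mul_gridNorm_le_of_sum_sq_le (by norm_num) (sq_mul_sum_sq_le_sum_cA_sq hω0 hn)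
  · simpa only [one_mul] using mul_gridNorm_le_of_sum_sq_le zero_le_one
      (by simpa only [one_pow, one_mul] using sum_cA_sq_le hω0 hn)
end
end

section
/- Let F : [0,1] → ℝ be six times continuously differentiable and let ζ(s) = 5(1−s)³ − 3(1−s)⁵. Then for every 1 ≤ i ≤ 2J−1: (F''(x_{i+1}) + 10F''(x_i) + F''(x_{i−1}))/12 = (F(x_{i+1}) − 2F(x_i) + F(x_{i−1}))/h² + (h⁴/360)·∫₀¹ [F⁽⁶⁾(x_i − s·h) + F⁽⁶⁾(x_i + s·h)]·ζ(s) ds. -/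
/-!
Expand `F (x ± h)` to sixth order and `F'' (x ± h)` to fourth order by Taylor's formula with
integral remainder on `[0, 1]`. In the symmetric sums the odd-order terms cancel, and in the
combination `(F''(x+h) + 10 F''(x) + F''(x-h))/12 - (F(x+h) - 2 F(x) + F(x-h))/h²` so do `F''(x)`
and `F⁽⁴⁾(x)`. What is left is `h⁴ (I₃/72 - I₅/120) = h⁴ (5 I₃ - 3 I₅)/360` with
`Iₘ = ∫₀¹ (1-s)ᵐ (F⁽⁶⁾(x-sh) + F⁽⁶⁾(x+sh)) ds`, i.e. the `ζ`-weighted integral.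
-/

open Finset

noncomputable section

open scoped Nat

theorem iteratedDeriv_iteratedDeriv {𝕜 F : Type*} [NontriviallyNormedField 𝕜]
    [NormedAddCommGroup F] [NormedSpace 𝕜 F] (k m : ℕ) (f : 𝕜 → F) :
    iteratedDeriv k (iteratedDeriv m f) = iteratedDeriv (k + m) f := by
  simp only [iteratedDeriv_eq_iterate, Function.iterate_add_apply]

section

variable {E : Type*} [NormedAddCommGroup E] [NormedSpace ℝ E] [CompleteSpace E]

theorem taylor_integral_remainder_unitInterval {f : ℝ → E} {n : ℕ}
    (hf : ContDiff ℝ (n + 1 : ℕ) f) (x h : ℝ) :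
    f (x + h) = ∑ k ∈ range (n + 1), (h ^ k / k !) • iteratedDeriv k f x
      + (h ^ (n + 1) / n !) •
          ∫ s in (0 : ℝ)..1, (1 - s) ^ n • iteratedDeriv (n + 1) f (x + s * h) := by
  rcases eq_or_ne h 0 with rfl | hh
  · simp [sum_range_succ']
  have huniq : UniqueDiffOn ℝ (Set.uIcc x (x + h)) := uniqueDiffOn_uIcc (by simpa using hh)
  have hwithin : ∀ k ≤ n + 1, ∀ t ∈ Set.uIcc x (x + h),
      iteratedDerivWithin k f (Set.uIcc x (x + h)) t = iteratedDeriv k f t := fun k hk t ht =>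
    iteratedDerivWithin_eq_iteratedDeriv huniq ((hf.of_le (by exact_mod_cast hk)).contDiffAt) ht
  have hpoly : taylorWithinEval f n (Set.uIcc x (x + h)) x (x + h)
      = ∑ k ∈ range (n + 1), (h ^ k / k !) • iteratedDeriv k f x := by
    rw [taylor_within_apply]
    refine sum_congr rfl fun k hk => ?_
    rw [hwithin k (mem_range.1 hk).le x Set.left_mem_uIcc]
    congr 1
    ring
  have hrem : (∫ t in x..x + h,
        ((x + h - t) ^ n / n !) • iteratedDerivWithin (n + 1) f (Set.uIcc x (x + h)) t)
      = (h ^ (n + 1) / n !) •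
          ∫ s in (0 : ℝ)..1, (1 - s) ^ n • iteratedDeriv (n + 1) f (x + s * h) := by
    set g : ℝ → E := fun t => ((x + h - t) ^ n / n !) • iteratedDeriv (n + 1) f t
    rw [intervalIntegral.integral_congr (g := g)
      (fun t ht => by simp only [g, hwithin (n + 1) le_rfl t ht])]
    have hsubst := intervalIntegral.smul_integral_comp_add_mul (a := 0) (b := 1) g h x
    simp only [mul_zero, add_zero, mul_one] at hsubst
    rw [← hsubst, ← intervalIntegral.integral_smul, ← intervalIntegral.integral_smul]
    refine intervalIntegral.integral_congr fun s _ => ?_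
    simp only [g, smul_smul, mul_comm s h, add_sub_add_left_eq_sub, ← mul_one_sub, mul_pow]
    congr 1
    ring
  have hTaylor := taylor_integral_remainder (hf.contDiffOn (s := Set.uIcc x (x + h)))
  rw [hpoly, hrem] at hTaylor
  rw [← hTaylor]
  abel

theorem taylor_integral_remainder_add_add_sub {f : ℝ → E} {n : ℕ} (hn : Odd n)
    (hf : ContDiff ℝ (n + 1 : ℕ) f) (x h : ℝ) :
    f (x + h) + f (x - h)
      = ∑ k ∈ range (n + 1), ((h ^ k + (-h) ^ k) / k !) • iteratedDeriv k f x
        + (h ^ (n + 1) / n !) • ∫ s in (0 : ℝ)..1,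
          (1 - s) ^ n • (iteratedDeriv (n + 1) f (x - s * h)
            + iteratedDeriv (n + 1) f (x + s * h)) := by
  have hc : Continuous (iteratedDeriv (n + 1) f) := hf.continuous_iteratedDeriv' _
  have hint : ∀ c : ℝ, IntervalIntegrable
      (fun s : ℝ => (1 - s) ^ n • iteratedDeriv (n + 1) f (x + s * c)) MeasureTheory.volume 0 1 :=
    fun c => by apply Continuous.intervalIntegrable; fun_prop
  have hneg : (-h) ^ (n + 1) = h ^ (n + 1) := hn.add_one.neg_pow h
  rw [sub_eq_add_neg x h, taylor_integral_remainder_unitInterval hf,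
    taylor_integral_remainder_unitInterval hf, hneg, add_add_add_comm, ← sum_add_distrib,
    ← smul_add, ← intervalIntegral.integral_add (hint _) (hint _)]
  simp only [add_div, add_smul, mul_neg, ← sub_eq_add_neg, smul_add, add_comm]

end

theorem stmt_2_general (J : ℕ) (hJ : 0 < J) (F : ℝ → ℝ) (hF : ContDiff ℝ 6 F)
    (i : ℕ) (hi1 : 1 ≤ i) :
    (iteratedDeriv 2 F ((↑(i + 1) : ℝ) * msh J) + 10 * iteratedDeriv 2 F ((i : ℝ) * msh J)
        + iteratedDeriv 2 F ((↑(i - 1) : ℝ) * msh J)) / 12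
      = (F ((↑(i + 1) : ℝ) * msh J) - 2 * F ((i : ℝ) * msh J) + F ((↑(i - 1) : ℝ) * msh J))
            / msh J ^ 2
        + msh J ^ 4 / 360 *
            ∫ s in (0:ℝ)..1,
              (iteratedDeriv 6 F ((i : ℝ) * msh J - s * msh J)
                  + iteratedDeriv 6 F ((i : ℝ) * msh J + s * msh J))
                * (5 * (1 - s) ^ 3 - 3 * (1 - s) ^ 5) := by
  have hh : msh J ≠ 0 := by unfold msh; positivity
  set x : ℝ := i * msh J
  set h := msh J
  rw [show ((i + 1 : ℕ) : ℝ) * h = x + h by push_cast; ring,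
    show ((i - 1 : ℕ) : ℝ) * h = x - h by push_cast [Nat.cast_sub hi1]; ring]
  set G : ℝ → ℝ := fun s => iteratedDeriv 6 F (x - s * h) + iteratedDeriv 6 F (x + s * h)
  have hF2 : ContDiff ℝ (3 + 1 : ℕ) (iteratedDeriv 2 F) := by
    rw [iteratedDeriv_eq_iterate]; exact hF.iterate_deriv' 4 2
  have expandF := taylor_integral_remainder_add_add_sub (n := 5) (by decide) hF x h
  have expandF2 := taylor_integral_remainder_add_add_sub (n := 3) (by decide) hF2 x h
  simp only [sum_range_succ, sum_range_zero, iteratedDeriv_iteratedDeriv, smul_eq_mul]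
    at expandF expandF2
  norm_num [Nat.factorial] at expandF expandF2
  have hint : ∀ m : ℕ, IntervalIntegrable (fun s => (1 - s) ^ m * G s) MeasureTheory.volume 0 1 :=
    fun m => by
      have := hF.continuous_iteratedDeriv' 6
      apply Continuous.intervalIntegrable
      fun_prop
  have split : (∫ s in (0:ℝ)..1, G s * (5 * (1 - s) ^ 3 - 3 * (1 - s) ^ 5))
      = 5 * (∫ s in (0:ℝ)..1, (1 - s) ^ 3 * G s) - 3 * ∫ s in (0:ℝ)..1, (1 - s) ^ 5 * G s := by
    rw [← intervalIntegral.integral_const_mul, ← intervalIntegral.integral_const_mul,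
      ← intervalIntegral.integral_sub ((hint 3).const_mul 5) ((hint 5).const_mul 3)]
    exact intervalIntegral.integral_congr fun s _ => by ring
  rw [split]
  field_simp
  linear_combination (360 * h ^ 2) * expandF2 - 4320 * expandF

/-- compact-difference identity with integral remainder (Lemma 2.3). -/
theorem stmt_2 (J : ℕ) (hJ : 0 < J) (F : ℝ → ℝ) (hF : ContDiff ℝ 6 F)
    (i : ℕ) (hi1 : 1 ≤ i) (hi2 : i ≤ 2 * J - 1) :
    (iteratedDeriv 2 F ((↑(i + 1) : ℝ) * msh J) + 10 * iteratedDeriv 2 F ((i : ℝ) * msh J)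
        + iteratedDeriv 2 F ((↑(i - 1) : ℝ) * msh J)) / 12
      = (F ((↑(i + 1) : ℝ) * msh J) - 2 * F ((i : ℝ) * msh J) + F ((↑(i - 1) : ℝ) * msh J))
            / msh J ^ 2
        + msh J ^ 4 / 360 *
            ∫ s in (0:ℝ)..1,
              (iteratedDeriv 6 F ((i : ℝ) * msh J - s * msh J)
                  + iteratedDeriv 6 F ((i : ℝ) * msh J + s * msh J))
                * (5 * (1 - s) ^ 3 - 3 * (1 - s) ^ 5) :=
  stmt_2_general J hJ F hF i hi1
end
end
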